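/- arXiv:2006.02693 — 3 statements merged into one kernel-verified Lean document; each statement's English description precedes it below -/
import Mathlib

section
/- There exists a positive constant C such that for every Calderón–Zygmund set R̃, setting R̃* = {x ∈ V : d(x, R̃) < h(R̃)/4}, one has μ(R̃*) ≤ C μ(R̃). -/
open MeasureTheory Set ENNReal Filter Function

/-- A weighted homogeneous tree setting: the homogeneous tree of order `m+1`
(a connected acyclic graph in which every vertex has `m+1` neighbours),
with a fixed doubly infinite geodesic `geo`, a numeration `idx` of `geo`,
the associated level function `level`, and the weighted measure `μ`
with `μ {x} = m ^ level x`. -/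
structure HomTreeSetting (m : ℕ) : Type 1 where
  V : Type
  measV : MeasurableSpace V
  measTop : measV = ⊤
  hm : 2 ≤ m
  G : SimpleGraph V
  conn : G.Connected
  acyclic : G.IsAcyclic
  deg : ∀ x : V, (G.neighborSet x).ncard = m + 1
  geo : Set V
  geoNbrs : ∀ v ∈ geo, (G.neighborSet v ∩ geo).ncard = 2
  geoGeodesic : ∀ u ∈ geo, ∀ v ∈ geo, ∀ w : V,
    G.dist u w + G.dist w v = G.dist u v → w ∈ geo
  idx : geo → ℤ
  idxBij : Function.Bijective idx
  idxDist : ∀ x y : geo, |idx x - idx y| = (G.dist x.1 y.1 : ℤ)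
  level : V → ℤ
  levelSpec : ∀ x : V, ∃ x' : geo,
    (∀ z : geo, G.dist x x'.1 ≤ G.dist x z.1) ∧
    level x = idx x' - (G.dist x x'.1 : ℤ)
  μ : @MeasureTheory.Measure V measV
  μspec : ∀ s : Set V, μ s = ∑' x : s, (m : ℝ≥0∞) ^ (level x.1)

attribute [instance] HomTreeSetting.measV

namespace HomTreeSetting

variable {m : ℕ}

/-- `x` lies below `y`. -/
def Below (S : HomTreeSetting m) (x y : S.V) : Prop :=
  S.level x = S.level y - (S.G.dist x y : ℤ)

/-- An admissible trapezoid: either degenerate (a singleton, with height 1) or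
the set of vertices lying below `root` whose level gap lies in `[ht, 2*ht)`. -/
structure AdmTrap (S : HomTreeSetting m) where
  root : S.V
  ht : ℕ
  ht_pos : 1 ≤ ht
  degen : Bool
  degen_ht : degen = true → ht = 1

variable {S : HomTreeSetting m}

/-- The underlying set of vertices of an admissible trapezoid. -/
def AdmTrap.set (R : S.AdmTrap) : Set S.V :=
  if R.degen then {R.root}
  else {x | S.Below x R.root ∧ (R.ht : ℤ) ≤ S.level R.root - S.level x ∧
    S.level R.root - S.level x < 2 * (R.ht : ℤ)}

/-- The envelope (Calderón–Zygmund set) of an admissible trapezoid. -/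
def AdmTrap.env (R : S.AdmTrap) : Set S.V :=
  if R.degen then {R.root}
  else {x | S.Below x R.root ∧ (R.ht : ℤ) ≤ 2 * (S.level R.root - S.level x) ∧
    S.level R.root - S.level x < 4 * (R.ht : ℤ)}

/-- The width `w(R) = m ^ ℓ(x_R)` of an admissible trapezoid. -/
noncomputable def AdmTrap.width (R : S.AdmTrap) : ℝ≥0∞ :=
  (m : ℝ≥0∞) ^ (S.level R.root)

/-- The dilated set `R̃* = {x : d(x, R̃) < h(R̃)/4}` of a Calderón–Zygmund set. -/
def AdmTrap.star (R : S.AdmTrap) : Set S.V :=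
  {x | ∃ y ∈ R.env, 4 * S.G.dist x y < R.ht}

variable (S)

/-- `E` is a Calderón–Zygmund set, i.e. the envelope of an admissible trapezoid. -/
def IsCZ (E : Set S.V) : Prop := ∃ R : S.AdmTrap, E = R.env

/-- Average of `f` over the set `E` with respect to `μ`. -/
noncomputable def avg (f : S.V → ℂ) (E : Set S.V) : ℂ :=
  (S.μ E).toReal⁻¹ • ∫ x in E, f x ∂S.μ

/-- The `q`-mean oscillation `(μ(E)⁻¹ ∫_E |f - f_E|^q dμ)^(1/q)` of `f` on `E`. -/
noncomputable def osc (q : ℝ) (f : S.V → ℂ) (E : Set S.V) : ℝ :=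
  ((S.μ E).toReal⁻¹ * ∫ x in E, ‖f x - S.avg f E‖ ^ q ∂S.μ) ^ (1 / q)

/-- The `BMO_q(μ)` (semi)norm. -/
noncomputable def bmoNorm (q : ℝ) (f : S.V → ℂ) : ℝ :=
  ⨆ R : S.AdmTrap, S.osc q f R.env

/-- Membership in `BMO_q(μ)`. -/
def MemBMO (q : ℝ) (f : S.V → ℂ) : Prop :=
  BddAbove (Set.range fun R : S.AdmTrap => S.osc q f R.env)

/-- A `(1,p)`-atom (`p = ⊤` gives `(1,∞)`-atoms). -/
def IsAtom (p : ℝ≥0∞) (a : S.V → ℂ) : Prop :=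
  ∃ R : S.AdmTrap, Function.support a ⊆ R.env ∧
    eLpNorm a p S.μ ≤ S.μ R.env ^ ((p⁻¹).toReal - 1) ∧
    ∫ x, a x ∂S.μ = 0

/-- `f = ∑ j, c j • a j` is an atomic decomposition of `f` with `(1,p)`-atoms
`a j` and `∑ j, ‖c j‖ < ∞`, the series converging to `f` in `L¹(μ)`. -/
def IsAtomicDecomp (p : ℝ≥0∞) (f : S.V → ℂ) (c : ℕ → ℂ) (a : ℕ → S.V → ℂ) : Prop :=
  (∀ j, S.IsAtom p (a j)) ∧ Summable (fun j => ‖c j‖) ∧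
  Filter.Tendsto
    (fun n => eLpNorm (fun x => f x - ∑ j ∈ Finset.range n, c j * a j x) 1 S.μ)
    Filter.atTop (nhds 0)

/-- Membership in the atomic Hardy space `H^{1,p}(μ)`. -/
def MemH1 (p : ℝ≥0∞) (f : S.V → ℂ) : Prop :=
  MeasureTheory.Integrable f S.μ ∧ ∃ c a, S.IsAtomicDecomp p f c a

/-- The `H^{1,p}(μ)` norm: infimum of `∑ j, ‖c j‖` over atomic decompositions. -/
noncomputable def h1Norm (p : ℝ≥0∞) (f : S.V → ℂ) : ℝ :=
  sInf {t : ℝ | ∃ c a, S.IsAtomicDecomp p f c a ∧ t = ∑' j, ‖c j‖}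

/-- Membership in `H^{1,p}_fin(μ)`: finite linear combinations of `(1,p)`-atoms. -/
def MemH1fin (p : ℝ≥0∞) (f : S.V → ℂ) : Prop :=
  ∃ (n : ℕ) (c : ℕ → ℂ) (a : ℕ → S.V → ℂ),
    (∀ j, j < n → S.IsAtom p (a j)) ∧
    f = fun x => ∑ j ∈ Finset.range n, c j * a j x

/-- The sharp maximal function `f^{♯,q}`. -/
noncomputable def sharpMax (q : ℝ) (f : S.V → ℂ) (x : S.V) : ℝ :=
  ⨆ R : {R : S.AdmTrap // x ∈ R.env}, S.osc q f R.1.env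

end HomTreeSetting

/-!
Every vertex `x` has a unique parent, the neighbour one level up, and `x` lies below `v` exactly
when `v` is an iterated parent of `x`. Each vertex has `m` children, so by induction every
generation `{x | parent^[k] x = v}` has measure `m ^ ℓ(v)`. A nondegenerate envelope of height `h`
contains the `3h` generations `h ≤ k < 4h` below its root, while a walk of length `< h/4` from it
cannot climb above the root, so `R̃*` lies in the first `5h` generations. Hence `μ(R̃*) ≤ 2 μ(R̃)`.
-/

namespace SimpleGraph

variable {V : Type*} {G : SimpleGraph V} {u v w w' x z : V}

lemma Walk.dist_add_dist_le_length (p : G.Walk u v) (hw : w ∈ p.support) :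
    G.dist u w + G.dist w v ≤ p.length := by
  obtain ⟨q, r, rfl⟩ := Walk.mem_support_iff_exists_append.mp hw
  rw [Walk.length_append]
  exact Nat.add_le_add (dist_le q) (dist_le r)

lemma IsAcyclic.length_eq_dist (hG : G.IsAcyclic) {p : G.Walk u v} (hp : p.IsPath) :
    p.length = G.dist u v := by
  obtain ⟨q, hq, hql⟩ := p.reachable.exists_path_of_dist
  rw [← hql, Subtype.mk.inj ((hG.subsingleton_path u v).elim ⟨p, hp⟩ ⟨q, hq⟩)]

lemma Connected.exists_adj_dist_add_one_eq (hG : G.Connected) (h : u ≠ v) :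
    ∃ w, G.Adj u w ∧ G.dist w v + 1 = G.dist u v := by
  obtain ⟨p, hp⟩ := hG.exists_walk_length_eq_dist u v
  have hnil : ¬ p.Nil := Walk.not_nil_of_ne h
  have hsnd : G.dist u p.snd = 1 := dist_eq_one_iff_adj.mpr (p.adj_snd hnil)
  have htail := dist_le p.tail
  have htri : G.dist u v ≤ G.dist u p.snd + G.dist p.snd v := hG.dist_triangle
  have := p.length_tail_add_one hnil
  exact ⟨p.snd, p.adj_snd hnil, by omega⟩

lemma IsTree.eq_of_adj_of_dist_add_one_eq (hG : G.IsTree) (hw : G.Adj u w) (hw' : G.Adj u w')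
    (hd : G.dist w v + 1 = G.dist u v) (hd' : G.dist w' v + 1 = G.dist u v) : w = w' := by
  obtain ⟨q, hq⟩ := hG.connected.exists_walk_length_eq_dist w v
  obtain ⟨q', hq'⟩ := hG.connected.exists_walk_length_eq_dist w' v
  have hp := (Walk.cons hw q).isPath_of_length_eq_dist (by simp [hq, hd])
  have hp' := (Walk.cons hw' q').isPath_of_length_eq_dist (by simp [hq', hd'])
  have := (hG.isAcyclic.subsingleton_path u v).elim ⟨_, hp⟩ ⟨_, hp'⟩
  simpa using congrArg (fun r : G.Path u v => r.1.snd) this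

/-- The nearest point `w` of a geodesically convex subset `A` of a tree is a gate for `A`. -/
lemma IsTree.dist_eq_add_of_forall_dist_le (hG : G.IsTree) {A : Set V}
    (hA : ∀ a ∈ A, ∀ b ∈ A, ∀ c, G.dist a c + G.dist c b = G.dist a b → c ∈ A)
    (hw : w ∈ A) (hmin : ∀ z ∈ A, G.dist x w ≤ G.dist x z) (hz : z ∈ A) :
    G.dist x z = G.dist x w + G.dist w z := by
  obtain ⟨Q, hQ, hQl⟩ := hG.connected.exists_path_of_dist x w
  obtain ⟨R, hR, hRl⟩ := hG.connected.exists_path_of_dist w z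
  have hRA : ∀ a ∈ R.support, a ∈ A := fun a ha =>
    hA w hw z hz a (le_antisymm (hRl ▸ R.dist_add_dist_le_length ha) hG.connected.dist_triangle)
  have hQA : ∀ a ∈ Q.support, a ∈ A → a = w := fun a ha haA => by
    have := Q.dist_add_dist_le_length ha
    have := hmin a haA
    exact hG.connected.dist_eq_zero_iff.mp (by omega)
  have hwR : w ∉ R.support.tail := by
    have := hR.support_nodup
    rw [← R.cons_tail_support] at this
    exact (List.nodup_cons.mp this).1
  have hQR : (Q.append R).IsPath := by
    rw [Walk.isPath_def, Walk.support_append]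
    refine hQ.support_nodup.append ((List.tail_sublist _).nodup hR.support_nodup) ?_
    intro a ha haR
    obtain rfl := hQA a ha (hRA a (List.mem_of_mem_tail haR))
    exact hwR haR
  rw [← hG.isAcyclic.length_eq_dist hQR, Walk.length_append, hQl, hRl]

end SimpleGraph

namespace HomTreeSetting

open SimpleGraph

variable {m : ℕ} {S : HomTreeSetting m} {x y v w w' : S.V}

variable (S) in
lemma isTree : S.G.IsTree := ⟨S.conn, S.acyclic⟩

lemma measurableSet (s : Set S.V) : MeasurableSet s := by
  rw [S.measTop]
  trivial

variable (S) in
noncomputable def atEnd : Filter S.geo := Filter.comap S.idx atTop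

instance : S.atEnd.NeBot := atTop_neBot.comap_of_surj S.idxBij.2

lemma eventually_le_idx (n : ℤ) : ∀ᶠ z in S.atEnd, n ≤ S.idx z :=
  (eventually_ge_atTop n).comap S.idx

lemma exists_gate (x : S.V) : ∃ x' : S.geo, S.level x = S.idx x' - S.G.dist x x' ∧
    ∀ z : S.geo, (S.G.dist x z : ℤ) = S.G.dist x x' + |S.idx x' - S.idx z| := by
  obtain ⟨x', hmin, hlev⟩ := S.levelSpec x
  refine ⟨x', hlev, fun z => ?_⟩
  rw [S.idxDist]
  exact_mod_cast S.isTree.dist_eq_add_of_forall_dist_le S.geoGeodesic x'.2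
    (fun z hz => hmin ⟨z, hz⟩) z.2

lemma idx_sub_dist_le_level (x : S.V) (z : S.geo) : S.idx z - S.G.dist x z ≤ S.level x := by
  obtain ⟨x', hlev, hdist⟩ := exists_gate x
  have := hdist z
  have := le_abs_self (S.idx z - S.idx x')
  rw [abs_sub_comm] at this
  omega

/-- `level` is the Busemann function of the end `atEnd`. -/
lemma eventually_level_eq (x : S.V) :
    ∀ᶠ z in S.atEnd, S.level x = S.idx z - S.G.dist x z := by
  obtain ⟨x', hlev, hdist⟩ := exists_gate x
  filter_upwards [eventually_le_idx (S.idx x')] with z hz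
  have := hdist z
  rw [abs_of_nonpos (by omega)] at this
  omega

lemma level_sub_level_le_dist (x y : S.V) : S.level x - S.level y ≤ S.G.dist x y := by
  obtain ⟨z, hz⟩ := (eventually_level_eq x).exists
  have := idx_sub_dist_le_level y z
  have : S.G.dist y z ≤ S.G.dist y x + S.G.dist x z := S.conn.dist_triangle
  have : S.G.dist y x = S.G.dist x y := SimpleGraph.dist_comm
  omega

lemma level_eq_add_one_or_sub_one_of_adj (h : S.G.Adj x y) :
    S.level y = S.level x + 1 ∨ S.level y = S.level x - 1 := by
  obtain ⟨z, hx, hy⟩ := ((eventually_level_eq x).and (eventually_level_eq y)).exists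
  have := S.isTree.dist_eq_dist_add_one_of_adj z h
  have : S.G.dist z x = S.G.dist x z := SimpleGraph.dist_comm
  have : S.G.dist z y = S.G.dist y z := SimpleGraph.dist_comm
  omega

lemma exists_adj_level_eq_add_one (x : S.V) : ∃ w, S.G.Adj x w ∧ S.level w = S.level x + 1 := by
  obtain ⟨z, hz, hlev⟩ :=
    ((eventually_le_idx (S.level x + 1)).and (eventually_level_eq x)).exists
  have hxz : x ≠ z := by
    intro h
    rw [h, dist_self] at hlev
    rw [h] at hz
    omega
  obtain ⟨w, hw, hd⟩ := S.conn.exists_adj_dist_add_one_eq hxz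
  have := idx_sub_dist_le_level w z
  have := level_sub_level_le_dist w x
  rw [SimpleGraph.dist_comm, dist_eq_one_iff_adj.mpr hw] at this
  exact ⟨w, hw, by omega⟩

lemma eq_of_adj_of_level_eq_add_one (hw : S.G.Adj x w) (hw' : S.G.Adj x w')
    (hl : S.level w = S.level x + 1) (hl' : S.level w' = S.level x + 1) : w = w' := by
  obtain ⟨z, hx, hz, hz'⟩ := ((eventually_level_eq x).and
    ((eventually_level_eq w).and (eventually_level_eq w'))).exists
  exact S.isTree.eq_of_adj_of_dist_add_one_eq (v := z.1) hw hw' (by omega) (by omega)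

variable (S) in
noncomputable def parent (x : S.V) : S.V := (exists_adj_level_eq_add_one x).choose

lemma adj_parent (x : S.V) : S.G.Adj x (S.parent x) :=
  (exists_adj_level_eq_add_one x).choose_spec.1

lemma level_parent (x : S.V) : S.level (S.parent x) = S.level x + 1 :=
  (exists_adj_level_eq_add_one x).choose_spec.2

lemma eq_parent_of_adj (h : S.G.Adj x w) (hl : S.level w = S.level x + 1) : w = S.parent x :=
  eq_of_adj_of_level_eq_add_one h (adj_parent x) hl (level_parent x)

lemma adj_iff_eq_parent_or_eq_parent : S.G.Adj x y ↔ y = S.parent x ∨ x = S.parent y := by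
  constructor
  · intro h
    rcases level_eq_add_one_or_sub_one_of_adj h with hl | hl
    · exact .inl (eq_parent_of_adj h hl)
    · exact .inr (eq_parent_of_adj h.symm (by omega))
  · rintro (rfl | rfl)
    exacts [adj_parent x, (adj_parent y).symm]

lemma level_iterate_parent (k : ℕ) (x : S.V) : S.level (S.parent^[k] x) = S.level x + k := by
  induction k with
  | zero => simp
  | succ k ih =>
    rw [iterate_succ_apply', level_parent, ih]
    push_cast
    ring

lemma dist_iterate_parent (k : ℕ) (x : S.V) : S.G.dist x (S.parent^[k] x) = k := by
  have hle : S.G.dist x (S.parent^[k] x) ≤ k := by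
    induction k with
    | zero => simp
    | succ k ih =>
      have := S.conn.dist_triangle (u := x) (v := S.parent^[k] x) (w := S.parent^[k + 1] x)
      rw [iterate_succ_apply', dist_eq_one_iff_adj.mpr (adj_parent _)] at this
      rw [iterate_succ_apply']
      omega
  have := level_sub_level_le_dist (S.parent^[k] x) x
  rw [level_iterate_parent, SimpleGraph.dist_comm] at this
  omega

lemma below_iterate_parent (k : ℕ) (x : S.V) : S.Below x (S.parent^[k] x) := by
  rw [Below, level_iterate_parent, dist_iterate_parent]
  ring

lemma Below.iterate_parent_dist (h : S.Below x v) : S.parent^[S.G.dist x v] x = v := by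
  induction hn : S.G.dist x v generalizing x with
  | zero => simpa using S.conn.dist_eq_zero_iff.mp hn
  | succ n ih =>
    obtain ⟨w, hw, hd⟩ := S.conn.exists_adj_dist_add_one_eq (u := x) (v := v)
      (by rintro rfl; simp at hn)
    have := level_sub_level_le_dist v w
    have := level_sub_level_le_dist w x
    have : S.G.dist v w = S.G.dist w v := SimpleGraph.dist_comm
    have : S.G.dist w x = 1 := dist_eq_one_iff_adj.mpr hw.symm
    rw [Below] at h
    obtain rfl : w = S.parent x := eq_parent_of_adj hw (by omega)
    rw [iterate_succ_apply]
    exact ih (by rw [Below]; omega) (by omega)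

lemma exists_iterate_parent_eq_of_dist_lt {k : ℕ} (hk : S.parent^[k] y = v)
    (hd : S.G.dist x y < k) : ∃ j, S.parent^[j] x = v := by
  induction hn : S.G.dist x y generalizing y k with
  | zero => exact ⟨k, by rwa [S.conn.dist_eq_zero_iff.mp hn]⟩
  | succ n ih =>
    obtain ⟨y', hy', hd'⟩ := S.conn.exists_adj_dist_add_one_eq (u := y) (v := x)
      (by rintro rfl; simp at hn)
    have : S.G.dist y x = S.G.dist x y := SimpleGraph.dist_comm
    have : S.G.dist y' x = S.G.dist x y' := SimpleGraph.dist_comm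
    rcases adj_iff_eq_parent_or_eq_parent.mp hy' with rfl | rfl
    · obtain ⟨j, rfl⟩ : ∃ j, k = j + 1 := ⟨k - 1, by omega⟩
      exact ih (k := j) (by rwa [iterate_succ_apply] at hk) (by omega) (by omega)
    · exact ih (k := k + 1) (by rwa [iterate_succ_apply]) (by omega) (by omega)

variable (S) in
def children (v : S.V) : Set S.V := S.parent ⁻¹' {v}

lemma insert_parent_children (v : S.V) :
    insert (S.parent v) (S.children v) = S.G.neighborSet v := by
  ext y
  simp [children, adj_iff_eq_parent_or_eq_parent, eq_comm]

lemma parent_notMem_children (v : S.V) : S.parent v ∉ S.children v := by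
  intro h
  have := level_parent (S.parent v)
  rw [show S.parent (S.parent v) = v from h, level_parent] at this
  omega

lemma children_finite (v : S.V) : (S.children v).Finite :=
  (Set.finite_of_ncard_ne_zero (by rw [S.deg]; omega)).subset
    ((Set.subset_insert _ _).trans (insert_parent_children v).subset)

lemma ncard_children (v : S.V) : (S.children v).ncard = m := by
  have := Set.ncard_insert_of_notMem (parent_notMem_children v) (children_finite v)
  rw [insert_parent_children, S.deg] at this
  omega

variable (S) in
def descendantsAt (v : S.V) (k : ℕ) : Set S.V := S.parent^[k] ⁻¹' {v}

lemma descendantsAt_zero (v : S.V) : S.descendantsAt v 0 = {v} := rfl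

lemma descendantsAt_succ (v : S.V) (k : ℕ) :
    S.descendantsAt v (k + 1) = ⋃ c ∈ S.children v, S.descendantsAt c k := by
  ext x
  simp only [descendantsAt, children, Set.mem_iUnion, Set.mem_preimage, Set.mem_singleton_iff,
    exists_prop, iterate_succ_apply', exists_eq_right']

lemma measure_descendantsAt (v : S.V) (k : ℕ) :
    S.μ (S.descendantsAt v k) = (m : ℝ≥0∞) ^ S.level v := by
  induction k generalizing v with
  | zero =>
    rw [descendantsAt_zero, S.μspec]
    exact tsum_singleton v fun x => (m : ℝ≥0∞) ^ S.level x
  | succ k ih =>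
    have hm : (m : ℝ≥0∞) ≠ 0 := Nat.cast_ne_zero.mpr (by have := S.hm; omega)
    have hfin := children_finite v
    have hdisj : Set.PairwiseDisjoint hfin.toFinset (S.descendantsAt · k) :=
      Set.pairwiseDisjoint_fiber _ _
    rw [descendantsAt_succ, ← hfin.coe_toFinset, Finset.set_biUnion_coe,
      measure_biUnion_finset hdisj fun _ _ => measurableSet _]
    rw [Finset.sum_congr rfl fun c hc => by
      rw [ih, show S.level c = S.level v - 1 by
        rw [← show S.parent c = v from (hfin.mem_toFinset.mp hc), level_parent]; ring]]
    rw [Finset.sum_const, ← Set.ncard_eq_toFinset_card _ hfin, ncard_children, nsmul_eq_mul]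
    calc (m : ℝ≥0∞) * m ^ (S.level v - 1) = m ^ (1 + (S.level v - 1)) := by
          rw [ENNReal.zpow_add hm (ENNReal.natCast_ne_top m), zpow_one]
      _ = m ^ S.level v := by rw [add_sub_cancel]

lemma measure_biUnion_descendantsAt (v : S.V) (t : Finset ℕ) :
    S.μ (⋃ k ∈ t, S.descendantsAt v k) = t.card * (m : ℝ≥0∞) ^ S.level v := by
  have hdisj : Set.PairwiseDisjoint t (S.descendantsAt v) := by
    intro k _ k' _ hk
    refine Set.disjoint_left.mpr fun x (hx : _ = v) (hx' : _ = v) => hk ?_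
    have := level_iterate_parent k x
    rw [hx, ← hx', level_iterate_parent] at this
    omega
  rw [measure_biUnion_finset hdisj fun _ _ => measurableSet _,
    Finset.sum_congr rfl fun k _ => measure_descendantsAt v k, Finset.sum_const, nsmul_eq_mul]

namespace AdmTrap

variable (R : S.AdmTrap)

lemma star_subset_env_of_degen (h : R.degen = true) : R.star ⊆ R.env := by
  rintro x ⟨y, hy, hxy⟩
  have hxy : S.G.dist x y = 0 := by have := R.degen_ht h; omega
  rwa [S.conn.dist_eq_zero_iff.mp hxy]

lemma biUnion_descendantsAt_subset_env (h : R.degen = false) :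
    ⋃ k ∈ Finset.Ico R.ht (4 * R.ht), S.descendantsAt R.root k ⊆ R.env := by
  simp only [Set.iUnion_subset_iff, Finset.mem_Ico]
  rintro k ⟨hk₁, hk₂⟩ x (hx : _ = R.root)
  simp only [env, h, Bool.false_eq_true, if_false, Set.mem_ofPred_eq]
  rw [← hx, level_iterate_parent]
  exact ⟨below_iterate_parent k x, by omega, by omega⟩

lemma star_subset_biUnion_descendantsAt (h : R.degen = false) :
    R.star ⊆ ⋃ k ∈ Finset.range (5 * R.ht), S.descendantsAt R.root k := by
  rintro x ⟨y, hy, hxy⟩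
  simp only [env, h, Bool.false_eq_true, if_false, Set.mem_ofPred_eq] at hy
  obtain ⟨hb, hlo, hhi⟩ := hy
  obtain ⟨j, hj⟩ := exists_iterate_parent_eq_of_dist_lt (x := x) hb.iterate_parent_dist
    (by rw [Below] at hb; omega)
  have hxj := dist_iterate_parent j x
  have := S.conn.dist_triangle (u := x) (v := y) (w := R.root)
  rw [Below] at hb
  rw [hj] at hxj
  simp only [Set.mem_iUnion, Finset.mem_range]
  exact ⟨j, by omega, hj⟩

lemma measure_star_le_two_mul : S.μ R.star ≤ 2 * S.μ R.env := by
  cases h : R.degen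
  · have := R.ht_pos
    calc S.μ R.star ≤ S.μ (⋃ k ∈ Finset.range (5 * R.ht), S.descendantsAt R.root k) :=
          measure_mono (star_subset_biUnion_descendantsAt R h)
      _ = (5 * R.ht : ℕ) * (m : ℝ≥0∞) ^ S.level R.root := by
          rw [measure_biUnion_descendantsAt, Finset.card_range]
      _ ≤ 2 * ((3 * R.ht : ℕ) * (m : ℝ≥0∞) ^ S.level R.root) := by
          rw [← mul_assoc]
          gcongr
          norm_cast
          omega
      _ = 2 * S.μ (⋃ k ∈ Finset.Ico R.ht (4 * R.ht), S.descendantsAt R.root k) := by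
          rw [measure_biUnion_descendantsAt, Nat.card_Ico]
          congr 3
          omega
      _ ≤ 2 * S.μ R.env := by
          gcongr
          exact biUnion_descendantsAt_subset_env R h
  · calc S.μ R.star ≤ S.μ R.env := measure_mono (star_subset_env_of_degen R h)
      _ ≤ 2 * S.μ R.env := le_mul_of_one_le_left' one_le_two

end AdmTrap

end HomTreeSetting

/-- There is a positive constant `C` such that for every
Calderón–Zygmund set `R̃`, with `R̃* = {x : d(x, R̃) < h(R̃)/4}`, one has
`μ(R̃*) ≤ C μ(R̃)`. -/
theorem measure_star_le (m : ℕ) (S : HomTreeSetting m) :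
    ∃ C : ℝ, 0 < C ∧ ∀ R : S.AdmTrap, S.μ R.star ≤ ENNReal.ofReal C * S.μ R.env :=
  ⟨2, two_pos, fun R => by simpa using R.measure_star_le_two_mul⟩
end

section
/- There exists a sequence {Q̃_n}_{n=0}^∞ of Calderón–Zygmund sets in the homogeneous tree such that Q̃_n ⊂ Q̃_{n+1} for every n and ∪_{n} Q̃_n = V. -/
open MeasureTheory Set ENNReal Filter Function

section Helpers

variable {V : Type*} {G : SimpleGraph V}

/-- Any path in a connected acyclic graph has length equal to the distance of
its endpoints. -/
lemma path_length_eq_dist (hc : G.Connected) (hac : G.IsAcyclic) {u v : V}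
    (p : G.Walk u v) (hp : p.IsPath) : p.length = G.dist u v := by
  classical
  obtain ⟨q, hq⟩ := hc.exists_walk_length_eq_dist u v
  have h1 : q.bypass.length ≤ q.length := SimpleGraph.Walk.length_bypass_le q
  have h2 : G.dist u v ≤ q.bypass.length := SimpleGraph.dist_le _
  have h3 : G.dist u v ≤ p.length := SimpleGraph.dist_le _
  have huniq : (⟨p, hp⟩ : G.Path u v) = ⟨q.bypass, q.bypass_isPath⟩ :=
    SimpleGraph.isAcyclic_iff_path_unique.mp hac _ _
  have : p.length = q.bypass.length := by
    have := congrArg (fun r : G.Path u v => (r : G.Walk u v).length) huniq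
    simpa using this
  omega

/-- Distance splits additively at any vertex of a distance-realizing walk. -/
lemma dist_split_at (hc : G.Connected) {x z w : V} (p : G.Walk x z)
    (hlen : p.length = G.dist x z) (hw : w ∈ p.support) :
    G.dist x w + G.dist w z = G.dist x z := by
  classical
  have hspec := congrArg SimpleGraph.Walk.length (p.take_spec hw)
  rw [SimpleGraph.Walk.length_append] at hspec
  have h1 : G.dist x w ≤ (p.takeUntil w hw).length := SimpleGraph.dist_le _
  have h2 : G.dist w z ≤ (p.dropUntil w hw).length := SimpleGraph.dist_le _
  have h3 : G.dist x z ≤ G.dist x w + G.dist w z := hc.dist_triangle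
  omega

/-- Appending two paths that share only their common endpoint gives a path. -/
lemma isPath_append {x w y : V} {p : G.Walk x w} {q : G.Walk w y}
    (hp : p.IsPath) (hq : q.IsPath)
    (hdisj : ∀ v ∈ p.support, v ∈ q.support → v = w) :
    (p.append q).IsPath := by
  rw [SimpleGraph.Walk.isPath_def, SimpleGraph.Walk.support_append]
  refine List.Nodup.append hp.support_nodup ?_ ?_
  · exact hq.support_nodup.tail
  · intro a ha ha'
    have haq : a ∈ q.support := List.mem_of_mem_tail ha'
    have haw : a = w := hdisj a ha haq
    have hcons : q.support = w :: q.support.tail := q.support_eq_cons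
    have hnodup := hq.support_nodup
    rw [hcons] at hnodup
    exact (List.nodup_cons.mp hnodup).1 (haw ▸ ha')

/-- In any walk ending in a set `geo`, there is a "first" vertex of `geo`
splitting the walk. -/
lemma exists_first_in_set (geo : Set V) {x z : V} (p : G.Walk x z)
    (hz : z ∈ geo) :
    ∃ w, w ∈ geo ∧ ∃ (p1 : G.Walk x w) (p2 : G.Walk w z),
      p1.length + p2.length = p.length ∧
      ∀ v ∈ p1.support, v ∈ geo → v = w := by
  classical
  induction p with
  | nil =>
    exact ⟨_, hz, SimpleGraph.Walk.nil, SimpleGraph.Walk.nil, by simp,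
      by intro v hv _; simpa using hv⟩
  | @cons a b c h q ih =>
    by_cases hx : a ∈ geo
    · exact ⟨a, hx, SimpleGraph.Walk.nil, SimpleGraph.Walk.cons h q, by simp,
        by intro v hv _; simpa using hv⟩
    · obtain ⟨w, hw, p1, p2, hlen, hfirst⟩ := ih hz
      refine ⟨w, hw, SimpleGraph.Walk.cons h p1, p2, by simp [← hlen]; omega, ?_⟩
      intro v hv hvg
      rw [SimpleGraph.Walk.support_cons] at hv
      rcases List.mem_cons.mp hv with rfl | hv'
      · exact absurd hvg hx
      · exact hfirst v hv' hvg

end Helpers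

namespace HomTreeSetting

variable {m : ℕ} (S : HomTreeSetting m)

/-- The nearest-point projection onto the geodesic splits distances. -/
lemma dist_proj (x : S.V) (x' : S.geo)
    (hmin : ∀ z : S.geo, S.G.dist x x'.1 ≤ S.G.dist x z.1) (z : S.geo) :
    S.G.dist x z.1 = S.G.dist x x'.1 + S.G.dist x'.1 z.1 := by
  classical
  have hc := S.conn
  obtain ⟨p, hp⟩ := hc.exists_walk_length_eq_dist x z.1
  obtain ⟨w, hw, p1, p2, hlen, hfirst⟩ := exists_first_in_set S.geo p z.2
  have hd1 : S.G.dist x w ≤ p1.length := SimpleGraph.dist_le _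
  have hd2 : S.G.dist w z.1 ≤ p2.length := SimpleGraph.dist_le _
  have htri : S.G.dist x z.1 ≤ S.G.dist x w + S.G.dist w z.1 := hc.dist_triangle
  -- a path from w to x' inside geo
  obtain ⟨q, hq⟩ := hc.exists_walk_length_eq_dist w x'.1
  have htlen : q.bypass.length = S.G.dist w x'.1 :=
    path_length_eq_dist hc S.acyclic _ q.bypass_isPath
  have htgeo : ∀ v ∈ q.bypass.support, v ∈ S.geo := by
    intro v hv
    exact S.geoGeodesic w hw x'.1 x'.2 v (dist_split_at hc q.bypass htlen hv)
  -- p1.bypass is a path from x to w whose only geo vertex is w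
  have hp1blen : p1.bypass.length = S.G.dist x w :=
    path_length_eq_dist hc S.acyclic _ p1.bypass_isPath
  have hbig : (p1.bypass.append q.bypass).IsPath := by
    refine isPath_append p1.bypass_isPath q.bypass_isPath ?_
    intro v hv hv'
    exact hfirst v (p1.support_bypass_subset hv) (htgeo v hv')
  have hbiglen : (p1.bypass.append q.bypass).length = S.G.dist x x'.1 :=
    path_length_eq_dist hc S.acyclic _ hbig
  rw [SimpleGraph.Walk.length_append, hp1blen, htlen] at hbiglen
  have hminw : S.G.dist x x'.1 ≤ S.G.dist x w := hmin ⟨w, hw⟩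
  have hwx' : S.G.dist w x'.1 = 0 := by omega
  have hwx'eq : w = x'.1 := (hc.dist_eq_zero_iff).mp hwx'
  subst hwx'eq
  omega

/-- On the geodesic, the level function agrees with the numeration. -/
lemma level_geo (z : S.geo) : S.level z.1 = S.idx z := by
  obtain ⟨x', hmin, heq⟩ := S.levelSpec z.1
  have h0 : S.G.dist z.1 z.1 = 0 := SimpleGraph.dist_self
  have h1 : S.G.dist z.1 x'.1 = 0 := le_antisymm (h0 ▸ hmin z) (Nat.zero_le _)
  have h2 : z.1 = x'.1 := (S.conn.dist_eq_zero_iff).mp h1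
  have h3 : x' = z := Subtype.ext h2.symm
  rw [heq, h3, h0]
  simp

/-- Characterization of lying below a geodesic vertex. -/
lemma below_geo_iff (x : S.V) (x' : S.geo)
    (hmin : ∀ z : S.geo, S.G.dist x x'.1 ≤ S.G.dist x z.1)
    (hlev : S.level x = S.idx x' - (S.G.dist x x'.1 : ℤ)) (z : S.geo) :
    S.Below x z.1 ↔ S.idx x' ≤ S.idx z := by
  have hproj := S.dist_proj x x' hmin z
  have habs := S.idxDist x' z
  have hlevz : S.level z.1 = S.idx z := S.level_geo z
  rw [HomTreeSetting.Below, hlevz, hlev, hproj]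
  push_cast
  rcases abs_cases (S.idx x' - S.idx z) with ⟨h1, h2⟩ | ⟨h1, h2⟩ <;> omega

end HomTreeSetting

/-- There exists an increasing sequence of Calderón–Zygmund sets
whose union is the whole tree. -/
theorem exists_increasing_CZ_covering (m : ℕ) (S : HomTreeSetting m) :
    ∃ Q : ℕ → Set S.V, (∀ n, S.IsCZ (Q n)) ∧ (∀ n, Q n ⊆ Q (n + 1)) ∧
      (⋃ n, Q n) = Set.univ := by
  classical
  set e : S.geo ≃ ℤ := Equiv.ofBijective S.idx S.idxBij with he_def
  have he : ∀ n : ℤ, S.idx (e.symm n) = n := fun n => e.apply_symm_apply n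
  have hlevγ : ∀ n : ℤ, S.level (e.symm n).1 = n := fun n => by
    rw [S.level_geo (e.symm n), he]
  -- the trapezoids
  set R : ℕ → S.AdmTrap := fun n =>
    ⟨(e.symm (2 * n + 1)).1, n + 1, Nat.le_add_left 1 n, false, by simp⟩ with hR_def
  refine ⟨fun n => (R n).env, fun n => ⟨R n, rfl⟩, ?_, ?_⟩
  · -- nesting
    intro n x hx
    have hxmem : S.Below x (e.symm (2 * n + 1)).1 ∧
        ((n : ℤ) + 1 ≤ 2 * (S.level (e.symm (2 * n + 1)).1 - S.level x) ∧
          S.level (e.symm (2 * n + 1)).1 - S.level x < 4 * ((n : ℤ) + 1)) := by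
      have := hx
      simp only [hR_def, HomTreeSetting.AdmTrap.env, Bool.false_eq_true, if_false,
        Set.mem_setOf_eq] at this
      exact_mod_cast this
    obtain ⟨x', hmin, hlev⟩ := S.levelSpec x
    have hiff := S.below_geo_iff x x' hmin hlev
    have hle : S.idx x' ≤ 2 * (n : ℤ) + 1 := by
      have := (hiff (e.symm (2 * n + 1))).mp hxmem.1
      rwa [he] at this
    have hbelow' : S.Below x (e.symm (2 * (n + 1 : ℕ) + 1)).1 := by
      refine (hiff (e.symm (2 * (n + 1 : ℕ) + 1))).mpr ?_
      rw [he]; push_cast; omega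
    have hg := hxmem.2
    rw [hlevγ] at hg
    simp only [hR_def, HomTreeSetting.AdmTrap.env, Bool.false_eq_true, if_false,
      Set.mem_setOf_eq]
    refine ⟨hbelow', ?_, ?_⟩ <;> rw [hlevγ] <;> push_cast at hg ⊢ <;> omega
  · -- covering
    rw [Set.eq_univ_iff_forall]
    intro x
    obtain ⟨x', hmin, hlev⟩ := S.levelSpec x
    have hiff := S.below_geo_iff x x' hmin hlev
    set n : ℕ := (max (S.idx x') (-S.level x)).toNat with hn_def
    have hn1 : S.idx x' ≤ (n : ℤ) := le_trans (le_max_left _ _) (Int.self_le_toNat _)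
    have hn2 : -S.level x ≤ (n : ℤ) := le_trans (le_max_right _ _) (Int.self_le_toNat _)
    have hlx : S.level x ≤ S.idx x' := by
      have : (0 : ℤ) ≤ (S.G.dist x x'.1 : ℤ) := Int.ofNat_nonneg _
      omega
    refine Set.mem_iUnion.mpr ⟨n, ?_⟩
    simp only [hR_def, HomTreeSetting.AdmTrap.env, Bool.false_eq_true, if_false,
      Set.mem_setOf_eq]
    have hbelow : S.Below x (e.symm (2 * n + 1)).1 := by
      refine (hiff (e.symm (2 * n + 1))).mpr ?_
      rw [he]; omega
    refine ⟨hbelow, ?_, ?_⟩ <;> rw [hlevγ] <;> push_cast <;> omega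
end

section
/- There exists a constant A > 0 such that for every f ∈ BMO_1(μ) there is a bounded linear functional L_f on H^1(μ) satisfying L_f(g) = ∫ f g dμ for every g ∈ H^{1,∞}_fin(μ), and ‖L_f‖_{(H^1)^*} ≤ A ‖f‖_{BMO_1}. -/
open MeasureTheory Set ENNReal Filter Function

/-!
For a `(1,∞)`-atom `a` supported in a Calderón–Zygmund set `E` and any 1-Lipschitz `T : ℂ → ℂ`,
`∫ (T ∘ f) a = ∫ (T ∘ f - T (f_E)) a`, whence `|∫ (T ∘ f) a| ≤ ‖f‖_{BMO_1}`. Pairing `f` with an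
`L¹`-convergent atomic series is only legitimate for bounded `f`, so we truncate: `f_k = T_k ∘ f`,
where `T_k` clamps real and imaginary parts to `[-k, k]`. For `g = ∑ λ_j a_j` this gives
`∫ f_k g = ∑ λ_j ∫ f_k a_j` and `|∫ f_k g| ≤ ‖f‖_{BMO_1} ∑ |λ_j|`. Calderón–Zygmund sets are finite,
so atoms are finitely supported and dominated convergence yields `∫ f_k g → ∑ λ_j ∫ f a_j`.
Hence `L_f g := lim_k ∫ f_k g` is linear, equals `∫ f g` on finitely supported `g`, and the
theorem holds with `A = 1`.
-/

open Topology

namespace Complex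

def truncate (t : ℝ) (z : ℂ) : ℂ := ⟨max (min z.re t) (-t), max (min z.im t) (-t)⟩

lemma norm_truncate_sub_truncate_le (t : ℝ) (z w : ℂ) :
    ‖truncate t z - truncate t w‖ ≤ ‖z - w‖ := by
  have clamp_le : ∀ a b : ℝ, |max (min a t) (-t) - max (min b t) (-t)| ≤ |a - b| := fun a b =>
    (abs_max_sub_max_le_abs _ _ _).trans ((abs_min_sub_min_le_max _ _ _ _).trans (by simp))
  have hre := sq_le_sq.2 (clamp_le z.re w.re)
  have him := sq_le_sq.2 (clamp_le z.im w.im)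
  rw [← sq_le_sq₀ (norm_nonneg _) (norm_nonneg _), Complex.sq_norm, Complex.sq_norm,
    normSq_apply, normSq_apply]
  simp only [truncate, sub_re, sub_im] at hre him ⊢
  nlinarith

lemma norm_truncate_le {t : ℝ} (ht : 0 ≤ t) (z : ℂ) : ‖truncate t z‖ ≤ 2 * t := by
  have clamp_le : ∀ a : ℝ, |max (min a t) (-t)| ≤ t := fun a =>
    abs_le.2 ⟨le_max_right _ _, max_le (min_le_right _ _) (by linarith)⟩
  have := norm_le_abs_re_add_abs_im (truncate t z)
  linarith [show |(truncate t z).re| ≤ t from clamp_le z.re,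
    show |(truncate t z).im| ≤ t from clamp_le z.im]

lemma truncate_eq_self {t : ℝ} {z : ℂ} (h : ‖z‖ ≤ t) : truncate t z = z := by
  have clamp_eq : ∀ a : ℝ, |a| ≤ ‖z‖ → max (min a t) (-t) = a := fun a ha => by
    rw [abs_le] at ha
    rw [min_eq_left (by linarith), max_eq_left (by linarith)]
  exact Complex.ext (clamp_eq _ (abs_re_le_norm z)) (clamp_eq _ (abs_im_le_norm z))

end Complex

namespace HomTreeSetting

variable {m : ℕ} {S : HomTreeSetting m}

instance : DiscreteMeasurableSpace S.V :=
  ⟨fun _ => S.measTop ▸ MeasurableSpace.measurableSet_top⟩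

lemma aestronglyMeasurable (h : S.V → ℂ) : AEStronglyMeasurable h S.μ :=
  Measurable.of_discrete.aestronglyMeasurable

lemma measure_singleton (x : S.V) : S.μ {x} = (m : ℝ≥0∞) ^ S.level x := by
  rw [S.μspec, tsum_singleton x fun v => (m : ℝ≥0∞) ^ S.level v]

lemma measure_singleton_pos (x : S.V) : 0 < S.μ {x} :=
  measure_singleton x ▸ ENNReal.zpow_pos (Nat.cast_ne_zero.2 (by have := S.hm; omega))
    (natCast_ne_top m) _

lemma measure_singleton_lt_top (x : S.V) : S.μ {x} < ∞ :=
  measure_singleton x ▸ ENNReal.zpow_lt_top (Nat.cast_ne_zero.2 (by have := S.hm; omega))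
    (natCast_ne_top m) _

lemma forall_of_ae {P : S.V → Prop} (h : ∀ᵐ x ∂S.μ, P x) (x : S.V) : P x := by
  by_contra hx
  exact (measure_singleton_pos x).ne'
    (measure_mono_null (singleton_subset_iff.2 hx) (ae_iff.1 h))

lemma integrableOn_of_finite {E : Type*} [NormedAddCommGroup E] (h : S.V → E) {s : Set S.V}
    (hs : s.Finite) : IntegrableOn h s S.μ := by
  rw [← biUnion_of_singleton s]
  exact (integrableOn_finite_biUnion hs).2 fun x _ =>
    (integrableOn_singleton_iff enorm_ne_top).2 (Or.inr (measure_singleton_lt_top x))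

lemma integrable_of_hasFiniteSupport {E : Type*} [NormedAddCommGroup E] {h : S.V → E}
    (hs : h.HasFiniteSupport) : Integrable h S.μ :=
  (integrableOn_of_finite h hs).integrable_of_forall_notMem_eq_zero fun _ => notMem_support.1

lemma finite_neighborSet (x : S.V) : (S.G.neighborSet x).Finite :=
  Set.finite_of_ncard_ne_zero (by rw [S.deg x]; omega)

lemma finite_setOf_dist_le (x : S.V) (n : ℕ) : {y | S.G.dist x y ≤ n}.Finite := by
  induction n with
  | zero =>
    refine (finite_singleton x).subset fun y hy => ?_
    exact ((S.conn.preconnected x y).dist_eq_zero_iff.1 (Nat.le_zero.1 hy)).symm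
  | succ n ih =>
    refine (ih.union (ih.biUnion fun w _ => finite_neighborSet w)).subset fun y hy => ?_
    obtain ⟨p, hp⟩ := (S.conn.preconnected y x).exists_walk_length_eq_dist
    cases p with
    | nil => exact Or.inl (by simp)
    | @cons _ w _ hadj q =>
      refine Or.inr (mem_biUnion (x := w) ?_ hadj.symm)
      have hq := SimpleGraph.dist_le q
      rw [SimpleGraph.Walk.length_cons, SimpleGraph.dist_comm] at hp
      rw [mem_ofPred_eq] at hy ⊢
      rw [SimpleGraph.dist_comm]
      omega

lemma finite_env (R : S.AdmTrap) : R.env.Finite := by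
  unfold AdmTrap.env
  split_ifs
  · exact finite_singleton _
  · refine (finite_setOf_dist_le R.root (4 * R.ht)).subset fun x ⟨hbelow, _, hlt⟩ => ?_
    rw [Below] at hbelow
    rw [mem_ofPred_eq, SimpleGraph.dist_comm]
    omega

lemma osc_nonneg (q : ℝ) (f : S.V → ℂ) (E : Set S.V) : 0 ≤ S.osc q f E := by
  unfold osc; positivity

lemma bmoNorm_nonneg (q : ℝ) (f : S.V → ℂ) : 0 ≤ S.bmoNorm q f :=
  Real.iSup_nonneg fun _ => osc_nonneg q _ _

lemma IsAtom.hasFiniteSupport {p : ℝ≥0∞} {a : S.V → ℂ} (ha : S.IsAtom p a) :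
    a.HasFiniteSupport :=
  let ⟨R, hR, _⟩ := ha
  (finite_env R).subset hR

lemma MemH1fin.hasFiniteSupport {p : ℝ≥0∞} {g : S.V → ℂ} (hg : S.MemH1fin p g) :
    g.HasFiniteSupport := by
  obtain ⟨n, c, a, ha, rfl⟩ := hg
  refine ((Finset.range n).finite_toSet.biUnion fun j hj => ?_).subset
    (Finset.support_sum _ _)
  exact (ha j (Finset.mem_range.1 hj)).hasFiniteSupport.mul_right fun _ => c j

lemma norm_apply_le_of_eLpNorm_top_le {a : S.V → ℂ} {E : Set S.V} (hs : support a ⊆ E)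
    (hb : eLpNorm a ⊤ S.μ ≤ (S.μ E)⁻¹) (x : S.V) : ‖a x‖ ≤ (S.μ E).toReal⁻¹ := by
  by_cases hx : a x = 0
  · rw [hx, norm_zero]; positivity
  have hpos : S.μ E ≠ 0 :=
    ((measure_singleton_pos x).trans_le (measure_mono (singleton_subset_iff.2 (hs hx)))).ne'
  have hle : ‖a x‖ₑ ≤ (S.μ E)⁻¹ := by
    rw [eLpNorm_exponent_top] at hb
    exact (forall_of_ae ae_le_eLpNormEssSup x).trans hb
  rw [← toReal_inv, ← toReal_enorm]
  exact ENNReal.toReal_mono (ENNReal.inv_ne_top.2 hpos) hle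

lemma norm_integral_comp_mul_le_osc {T : ℂ → ℂ} (hT : ∀ z w, ‖T z - T w‖ ≤ ‖z - w‖)
    (f : S.V → ℂ) {a : S.V → ℂ} {R : S.AdmTrap} (hs : support a ⊆ R.env)
    (hb : ∀ x, ‖a x‖ ≤ (S.μ R.env).toReal⁻¹) (h0 : ∫ x, a x ∂S.μ = 0) :
    ‖∫ x, T (f x) * a x ∂S.μ‖ ≤ S.osc 1 f R.env := by
  set E := R.env
  set c := T (S.avg f E)
  have hE := finite_env R
  have hfs : ∀ F : S.V → ℂ, (fun x => F x * a x).HasFiniteSupport := fun F =>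
    (hE.subset hs).subset (support_mul_subset_right F a)
  calc ‖∫ x, T (f x) * a x ∂S.μ‖
      = ‖∫ x, (T (f x) - c) * a x ∂S.μ‖ := by
        simp_rw [sub_mul]
        rw [integral_sub (integrable_of_hasFiniteSupport (hfs _))
          (integrable_of_hasFiniteSupport (hfs _)), integral_const_mul, h0, mul_zero, sub_zero]
    _ ≤ ∫ x, ‖T (f x) - c‖ * ‖a x‖ ∂S.μ := by
        simpa only [norm_mul] using norm_integral_le_integral_norm fun x => (T (f x) - c) * a x
    _ = ∫ x in E, ‖T (f x) - c‖ * ‖a x‖ ∂S.μ := by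
        refine (setIntegral_eq_integral_of_forall_compl_eq_zero fun x hx => ?_).symm
        rw [notMem_support.1 fun h => hx (hs h), norm_zero, mul_zero]
    _ ≤ ∫ x in E, ‖f x - S.avg f E‖ * (S.μ E).toReal⁻¹ ∂S.μ :=
        setIntegral_mono_on (integrableOn_of_finite _ hE) (integrableOn_of_finite _ hE)
          MeasurableSet.of_discrete fun x _ =>
            mul_le_mul (hT _ _) (hb x) (norm_nonneg _) (norm_nonneg _)
    _ = S.osc 1 f E := by
        rw [integral_mul_const, osc]
        simp only [Real.rpow_one, div_one, mul_comm]

lemma norm_integral_comp_mul_atom_le {T : ℂ → ℂ} (hT : ∀ z w, ‖T z - T w‖ ≤ ‖z - w‖)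
    {f : S.V → ℂ} (hf : S.MemBMO 1 f) {a : S.V → ℂ} (ha : S.IsAtom ⊤ a) :
    ‖∫ x, T (f x) * a x ∂S.μ‖ ≤ S.bmoNorm 1 f := by
  obtain ⟨R, hs, hb, h0⟩ := ha
  simp only [inv_top, toReal_zero, zero_sub, ENNReal.rpow_neg_one] at hb
  exact (norm_integral_comp_mul_le_osc hT f hs (norm_apply_le_of_eLpNorm_top_le hs hb) h0).trans
    (le_ciSup hf R)

section Decomposition

open Complex

variable {f g : S.V → ℂ} {c : ℕ → ℂ} {a : ℕ → S.V → ℂ} {T : ℂ → ℂ}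

lemma IsAtomicDecomp.tendsto_sum_integral_mul {p : ℝ≥0∞} (hd : S.IsAtomicDecomp p g c a)
    {F : S.V → ℂ} {C : ℝ} (hF : ∀ x, ‖F x‖ ≤ C) :
    Tendsto (fun n => ∑ j ∈ Finset.range n, c j * ∫ x, F x * a j x ∂S.μ) atTop
      (𝓝 (∫ x, F x * g x ∂S.μ)) := by
  have hint : ∀ j, Integrable (fun x => F x * a j x) S.μ := fun j =>
    integrable_of_hasFiniteSupport ((hd.1 j).hasFiniteSupport.mul_right F)
  have hpartial : ∀ n, ∑ j ∈ Finset.range n, c j * ∫ x, F x * a j x ∂S.μ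
      = ∫ x, F x * ∑ j ∈ Finset.range n, c j * a j x ∂S.μ := fun n => by
    simp_rw [← integral_const_mul, Finset.mul_sum]
    rw [← integral_finsetSum _ fun j _ => (hint j).const_mul (c j)]
    exact integral_congr_ae (ae_of_all _ fun x => Finset.sum_congr rfl fun j _ => by ring)
  simp_rw [hpartial]
  refine tendsto_integral_of_L1' _ (aestronglyMeasurable _) (Eventually.of_forall fun n => ?_) ?_
  · simp_rw [Finset.mul_sum, ← mul_assoc, mul_comm (F _) (c _), mul_assoc]
    exact integrable_finsetSum _ fun j _ => (hint j).const_mul (c j)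
  · have hbound : ∀ n, eLpNorm ((fun x => F x * ∑ j ∈ Finset.range n, c j * a j x)
        - fun x => F x * g x) 1 S.μ
        ≤ ENNReal.ofReal C * eLpNorm (fun x => g x - ∑ j ∈ Finset.range n, c j * a j x) 1 S.μ :=
      fun n => eLpNorm_le_mul_eLpNorm_of_ae_le_mul (Eventually.of_forall fun x => by
        rw [Pi.sub_apply, ← mul_sub, norm_mul, norm_sub_rev]
        exact mul_le_mul_of_nonneg_right (hF x) (norm_nonneg _)) 1
    have hlim := ENNReal.Tendsto.const_mul hd.2.2 (Or.inr ofReal_ne_top) (a := ENNReal.ofReal C)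
    rw [mul_zero] at hlim
    exact tendsto_of_tendsto_of_tendsto_of_le_of_le tendsto_const_nhds hlim (fun _ => zero_le)
      hbound

lemma IsAtomicDecomp.hasSum_integral_comp_mul (hT : ∀ z w, ‖T z - T w‖ ≤ ‖z - w‖) {C : ℝ}
    (hTC : ∀ z, ‖T z‖ ≤ C) (hf : S.MemBMO 1 f) (hd : S.IsAtomicDecomp ⊤ g c a) :
    HasSum (fun j => c j * ∫ x, T (f x) * a j x ∂S.μ) (∫ x, T (f x) * g x ∂S.μ) := by
  have hsum : Summable fun j => ‖c j * ∫ x, T (f x) * a j x ∂S.μ‖ :=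
    (hd.2.1.mul_right (S.bmoNorm 1 f)).of_nonneg_of_le (fun _ => norm_nonneg _) fun j => by
      rw [norm_mul]
      exact mul_le_mul_of_nonneg_left (norm_integral_comp_mul_atom_le hT hf (hd.1 j))
        (norm_nonneg _)
  exact (hasSum_iff_tendsto_nat_of_summable_norm hsum).2
    (hd.tendsto_sum_integral_mul fun x => hTC (f x))

lemma norm_integral_comp_mul_le (hT : ∀ z w, ‖T z - T w‖ ≤ ‖z - w‖) {C : ℝ}
    (hTC : ∀ z, ‖T z‖ ≤ C) (hf : S.MemBMO 1 f) (hg : S.MemH1 ⊤ g) :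
    ‖∫ x, T (f x) * g x ∂S.μ‖ ≤ S.bmoNorm 1 f * S.h1Norm ⊤ g := by
  obtain ⟨c, a, hd⟩ := hg.2
  rw [h1Norm, ← smul_eq_mul, ← Real.sInf_smul_of_nonneg (bmoNorm_nonneg 1 f)]
  refine le_csInf ⟨_, smul_mem_smul_set ⟨c, a, hd, rfl⟩⟩ ?_
  rintro _ ⟨_, ⟨c, a, hd, rfl⟩, rfl⟩
  refine (hd.hasSum_integral_comp_mul hT hTC hf).norm_le_of_bounded
    (hd.2.1.hasSum.mul_left (S.bmoNorm 1 f)) fun j => ?_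
  rw [norm_mul, mul_comm]
  exact mul_le_mul_of_nonneg_right (norm_integral_comp_mul_atom_le hT hf (hd.1 j)) (norm_nonneg _)

lemma integrable_truncate_mul (k : ℕ) (hg : Integrable g S.μ) :
    Integrable (fun x => truncate k (f x) * g x) S.μ :=
  hg.bdd_mul (aestronglyMeasurable _) (ae_of_all _ fun x => norm_truncate_le k.cast_nonneg (f x))

lemma integral_truncate_mul_eventuallyEq (f : S.V → ℂ) (hg : g.HasFiniteSupport) :
    (fun k : ℕ => ∫ x, truncate k (f x) * g x ∂S.μ) =ᶠ[atTop] fun _ => ∫ x, f x * g x ∂S.μ := by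
  obtain ⟨t, ht⟩ := (hg.image fun x => ‖f x‖).bddAbove
  filter_upwards [tendsto_natCast_atTop_atTop.eventually_ge_atTop t] with k hk
  congr 1; funext x
  by_cases hx : g x = 0
  · rw [hx, mul_zero, mul_zero]
  · rw [truncate_eq_self ((ht (mem_image_of_mem _ hx)).trans hk)]

lemma IsAtomicDecomp.tendsto_integral_truncate_mul (hf : S.MemBMO 1 f)
    (hd : S.IsAtomicDecomp ⊤ g c a) :
    Tendsto (fun k : ℕ => ∫ x, truncate k (f x) * g x ∂S.μ) atTop
      (𝓝 (∑' j, c j * ∫ x, f x * a j x ∂S.μ)) := by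
  have hsum : ∀ k : ℕ, ∑' j, c j * ∫ x, truncate k (f x) * a j x ∂S.μ
      = ∫ x, truncate k (f x) * g x ∂S.μ := fun k =>
    (hd.hasSum_integral_comp_mul (norm_truncate_sub_truncate_le k)
      (norm_truncate_le k.cast_nonneg) hf).tsum_eq
  refine (tendsto_tsum_of_dominated_convergence (hd.2.1.mul_right (S.bmoNorm 1 f))
    (fun j => ?_) (Eventually.of_forall fun k j => ?_)).congr hsum
  · refine tendsto_const_nhds.congr' ?_
    filter_upwards [integral_truncate_mul_eventuallyEq f (hd.1 j).hasFiniteSupport] with k hk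
    rw [hk]
  · rw [norm_mul]
    exact mul_le_mul_of_nonneg_left (norm_integral_comp_mul_atom_le
      (norm_truncate_sub_truncate_le k) hf (hd.1 j)) (norm_nonneg _)

end Decomposition

end HomTreeSetting

open HomTreeSetting Complex

/-- There exists `A > 0` such that every `f ∈ BMO_1(μ)` induces
a bounded linear functional `L_f` on `H^1(μ) = H^{1,∞}(μ)` with
`L_f(g) = ∫ f g dμ` for every `g ∈ H^{1,∞}_fin(μ)` and `‖L_f‖_{(H^1)^*} ≤ A ‖f‖_{BMO_1}`. -/
theorem bmo_gives_functional_on_H1 (m : ℕ) (S : HomTreeSetting m) :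
    ∃ A : ℝ, 0 < A ∧ ∀ f : S.V → ℂ, S.MemBMO 1 f →
      ∃ L : (S.V → ℂ) → ℂ,
        (∀ g₁ g₂ : S.V → ℂ, S.MemH1 ⊤ g₁ → S.MemH1 ⊤ g₂ →
          L (g₁ + g₂) = L g₁ + L g₂) ∧
        (∀ (c : ℂ) (g : S.V → ℂ), S.MemH1 ⊤ g → L (c • g) = c * L g) ∧
        (∀ g : S.V → ℂ, S.MemH1fin ⊤ g → L g = ∫ x, f x * g x ∂S.μ) ∧
        (∀ g : S.V → ℂ, S.MemH1 ⊤ g → ‖L g‖ ≤ A * S.bmoNorm 1 f * S.h1Norm ⊤ g) := by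
  refine ⟨1, one_pos, fun f hf => ?_⟩
  let pairing (g : S.V → ℂ) (k : ℕ) : ℂ := ∫ x, truncate k (f x) * g x ∂S.μ
  have hL : ∀ g, S.MemH1 ⊤ g → Tendsto (pairing g) atTop (𝓝 (limUnder atTop (pairing g))) :=
    fun g ⟨_, _, _, hd⟩ => tendsto_nhds_limUnder ⟨_, hd.tendsto_integral_truncate_mul hf⟩
  refine ⟨fun g => limUnder atTop (pairing g), fun g₁ g₂ h₁ h₂ => ?_, fun c g hg => ?_,
    fun g hg => ?_, fun g hg => ?_⟩
  · refine (((hL g₁ h₁).add (hL g₂ h₂)).congr fun k => ?_).limUnder_eq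
    simp only [pairing, Pi.add_apply, mul_add]
    exact (integral_add (integrable_truncate_mul k h₁.1) (integrable_truncate_mul k h₂.1)).symm
  · refine (((hL g hg).const_mul c).congr fun k => ?_).limUnder_eq
    simp only [pairing, Pi.smul_apply, smul_eq_mul, ← integral_const_mul, mul_left_comm]
  · exact (tendsto_const_nhds.congr'
      (integral_truncate_mul_eventuallyEq f hg.hasFiniteSupport).symm).limUnder_eq
  · rw [one_mul]
    exact le_of_tendsto (hL g hg).norm (Eventually.of_forall fun k =>
      norm_integral_comp_mul_le (norm_truncate_sub_truncate_le k)
        (norm_truncate_le k.cast_nonneg) hf hg)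
end
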